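/- arXiv:1412.8460 — 7 statements merged into one kernel-verified Lean document; each statement's English description precedes it below -/
import Mathlib

section
/- For any vertex u of a finite graph G, c(G) ≤ c(G \ u) + c(G \ ({u} ∪ N(u))), where G \ S denotes the induced subgraph on the complement of S and N(u) is the neighbourhood of u. -/
open Classical

variable {V : Type*}

/-- A finset of vertices is independent if no two of its members are adjacent. -/
def IsIndepSet (G : SimpleGraph V) (s : Finset V) : Prop :=
  ∀ u ∈ s, ∀ v ∈ s, ¬ G.Adj u v

/-- The set of faces of the independence complex of `G` (including the empty face). -/
def IndFaces (G : SimpleGraph V) : Set (Finset V) :=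
  {s | IsIndepSet G s}

/-- `P` is a matching on the face poset `Δ`: a set of disjoint covering pairs. -/
def IsPosetMatching (Δ : Set (Finset V)) (P : Set (Finset V × Finset V)) : Prop :=
  (∀ p ∈ P, p.1 ∈ Δ ∧ p.2 ∈ Δ ∧ p.1 ⊆ p.2 ∧ p.2.card = p.1.card + 1) ∧
  (∀ p ∈ P, ∀ q ∈ P, p ≠ q → p.1 ≠ q.1 ∧ p.1 ≠ q.2 ∧ p.2 ≠ q.1 ∧ p.2 ≠ q.2)

/-- A cycle in a matching: distinct matched pairs `{σ₁⊂τ₁},…,{σₙ⊂τₙ}`, `n > 1`,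
with `σ_{i+1} ⊂ τ_i` for `i < n` and `σ₁ ⊂ τₙ`. -/
def MatchingHasCycle (P : Set (Finset V × Finset V)) : Prop :=
  ∃ n : ℕ, 2 ≤ n ∧ ∃ f : ℕ → Finset V × Finset V,
    (∀ i < n, f i ∈ P) ∧ Set.InjOn f (Set.Iio n) ∧
    (∀ i, i + 1 < n → (f (i + 1)).1 ⊂ (f i).2) ∧ (f 0).1 ⊂ (f (n - 1)).2

/-- An acyclic (Morse) matching on the face poset `Δ`. -/
def IsAcyclicMatching (Δ : Set (Finset V)) (P : Set (Finset V × Finset V)) : Prop :=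
  IsPosetMatching Δ P ∧ ¬ MatchingHasCycle P

/-- The critical (unmatched) faces of `Δ` with respect to `P`. -/
def criticalSet (Δ : Set (Finset V)) (P : Set (Finset V × Finset V)) : Set (Finset V) :=
  {s ∈ Δ | ∀ p ∈ P, s ≠ p.1 ∧ s ≠ p.2}

/-- `cInvariant G` is the minimal number of critical cells in an acyclic matching on the
face poset of the independence complex of `G`. -/
noncomputable def cInvariant (G : SimpleGraph V) : ℕ :=
  sInf {n | ∃ P, IsAcyclicMatching (IndFaces G) P ∧ (criticalSet (IndFaces G) P).ncard = n}

section Aux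

variable {W : Type*}

/-- Apply `ℓ` to both components of a pair. -/
def liftPair (ℓ : Finset W → Finset V) (p : Finset W × Finset W) : Finset V × Finset V :=
  (ℓ p.1, ℓ p.2)

lemma empty_acyclic (Δ : Set (Finset V)) :
    IsAcyclicMatching Δ (∅ : Set (Finset V × Finset V)) := by
  refine ⟨⟨fun p hp => hp.elim, fun p hp => hp.elim⟩, ?_⟩
  rintro ⟨n, hn, f, hf, -⟩
  exact (hf 0 (by omega)).elim

lemma cInv_attained (G : SimpleGraph V) :
    ∃ P, IsAcyclicMatching (IndFaces G) P ∧
      (criticalSet (IndFaces G) P).ncard = cInvariant G := by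
  have hne : {n | ∃ P, IsAcyclicMatching (IndFaces G) P ∧
      (criticalSet (IndFaces G) P).ncard = n}.Nonempty :=
    ⟨(criticalSet (IndFaces G) (∅ : Set (Finset V × Finset V))).ncard, ∅,
      empty_acyclic _, rfl⟩
  exact Nat.sInf_mem hne

lemma isPosetMatching_image {ℓ : Finset W → Finset V} {c : ℕ}
    (hinj : Function.Injective ℓ) (hmono : ∀ s t : Finset W, s ⊆ t → ℓ s ⊆ ℓ t)
    (hcard : ∀ s : Finset W, (ℓ s).card = s.card + c)
    {Δ' : Set (Finset W)} {Δ : Set (Finset V)} (hΔ : ∀ s ∈ Δ', ℓ s ∈ Δ)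
    {P : Set (Finset W × Finset W)} (hP : IsPosetMatching Δ' P) :
    IsPosetMatching Δ (liftPair ℓ '' P) := by
  constructor
  · rintro p ⟨q, hq, rfl⟩
    obtain ⟨h1, h2, h3, h4⟩ := hP.1 q hq
    refine ⟨hΔ _ h1, hΔ _ h2, hmono _ _ h3, ?_⟩
    simp only [liftPair, hcard]
    omega
  · rintro p ⟨p', hp', rfl⟩ q ⟨q', hq', rfl⟩ hne
    have hne' : p' ≠ q' := fun h => hne (by rw [h])
    obtain ⟨a, b, c', d⟩ := hP.2 p' hp' q' hq' hne'
    exact ⟨fun h => a (hinj h), fun h => b (hinj h), fun h => c' (hinj h),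
      fun h => d (hinj h)⟩

lemma ssubset_reflect {ℓ : Finset W → Finset V}
    (hsub : ∀ s t : Finset W, ℓ s ⊆ ℓ t → s ⊆ t)
    {s t : Finset W} (h : ℓ s ⊂ ℓ t) : s ⊂ t := by
  rw [Finset.ssubset_iff_subset_ne]
  refine ⟨hsub _ _ h.subset, fun hc => ?_⟩
  exact h.ne (by rw [hc])

lemma cycle_transfer {ℓ : Finset W → Finset V}
    (hsub : ∀ s t : Finset W, ℓ s ⊆ ℓ t → s ⊆ t)
    {P : Set (Finset W × Finset W)} {n : ℕ} (hn : 2 ≤ n)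
    {f : ℕ → Finset V × Finset V}
    (hmem : ∀ i < n, f i ∈ liftPair ℓ '' P)
    (hinjf : Set.InjOn f (Set.Iio n))
    (hchain : ∀ i, i + 1 < n → (f (i + 1)).1 ⊂ (f i).2)
    (hwrap : (f 0).1 ⊂ (f (n - 1)).2) : MatchingHasCycle P := by
  classical
  have key : ∀ i, i < n → ∃ p, p ∈ P ∧ liftPair ℓ p = f i := fun i hi => hmem i hi
  set g : ℕ → Finset W × Finset W :=
    fun i => if h : i < n then (key i h).choose else (∅, ∅) with hg
  have hg1 : ∀ i (h : i < n), g i ∈ P := by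
    intro i h; simp only [hg, dif_pos h]; exact (key i h).choose_spec.1
  have hg2 : ∀ i (h : i < n), liftPair ℓ (g i) = f i := by
    intro i h; simp only [hg, dif_pos h]; exact (key i h).choose_spec.2
  have hg2a : ∀ i (h : i < n), ℓ (g i).1 = (f i).1 := fun i h =>
    congrArg Prod.fst (hg2 i h)
  have hg2b : ∀ i (h : i < n), ℓ (g i).2 = (f i).2 := fun i h =>
    congrArg Prod.snd (hg2 i h)
  refine ⟨n, hn, g, fun i hi => hg1 i hi, ?_, ?_, ?_⟩
  · intro i hi j hj he
    exact hinjf hi hj (by rw [← hg2 i hi, ← hg2 j hj, he])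
  · intro i h
    have h1 : ℓ (g (i + 1)).1 ⊂ ℓ (g i).2 := by
      rw [hg2a _ h, hg2b _ (by omega)]
      exact hchain i h
    exact ssubset_reflect hsub h1
  · have h1 : ℓ (g 0).1 ⊂ ℓ (g (n - 1)).2 := by
      rw [hg2a _ (by omega), hg2b _ (by omega)]
      exact hwrap
    exact ssubset_reflect hsub h1

end Aux

/-- For any vertex `u`, `c(G) ≤ c(G \ u) + c(G \ ({u} ∪ N(u)))`. -/
theorem statement_2 {V : Type*} [Finite V] (G : SimpleGraph V) (u : V) :
    cInvariant G ≤ cInvariant (G.induce {v | v ≠ u}) +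
      cInvariant (G.induce (({u} : Set V) ∪ G.neighborSet u)ᶜ) := by
  classical
  have _inst := Fintype.ofFinite V
  set sA : Set V := {v | v ≠ u} with hsAdef
  set sB : Set V := (({u} : Set V) ∪ G.neighborSet u)ᶜ with hsBdef
  obtain ⟨P₁, hP₁, hc₁⟩ := cInv_attained (G.induce sA)
  obtain ⟨P₂, hP₂, hc₂⟩ := cInv_attained (G.induce sB)
  set eA : ↥sA ↪ V := Function.Embedding.subtype _ with heA
  set eB : ↥sB ↪ V := Function.Embedding.subtype _ with heB
  set ℓA : Finset ↥sA → Finset V := fun s => s.map eA with hℓA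
  set ℓB : Finset ↥sB → Finset V := fun s => insert u (s.map eB) with hℓB
  -- basic membership facts
  have huB : u ∉ sB := by simp [hsBdef]
  have hAnot : ∀ s : Finset ↥sA, u ∉ ℓA s := by
    intro s h
    simp only [hℓA, Finset.mem_map, heA, Function.Embedding.coe_subtype] at h
    obtain ⟨a, -, ha⟩ := h
    exact a.2 ha
  have hBmapnot : ∀ s : Finset ↥sB, u ∉ s.map eB := by
    intro s h
    simp only [Finset.mem_map, heB, Function.Embedding.coe_subtype] at h
    obtain ⟨a, -, ha⟩ := h
    exact huB (ha ▸ a.2)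
  -- properties of the two lifts
  have hAinj : Function.Injective ℓA := Finset.map_injective eA
  have hAmono : ∀ s t : Finset ↥sA, s ⊆ t → ℓA s ⊆ ℓA t :=
    fun s t h => Finset.map_subset_map.2 h
  have hAsub : ∀ s t : Finset ↥sA, ℓA s ⊆ ℓA t → s ⊆ t :=
    fun s t h => Finset.map_subset_map.1 h
  have hAcard : ∀ s : Finset ↥sA, (ℓA s).card = s.card + 0 := by
    intro s; simp [hℓA]
  have hBsub' : ∀ s t : Finset ↥sB, ℓB s ⊆ ℓB t → s.map eB ⊆ t.map eB := by
    intro s t h x hx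
    have hxu : x ≠ u := fun hc => hBmapnot s (hc ▸ hx)
    have : x ∈ ℓB t := h (Finset.mem_insert_of_mem hx)
    rcases Finset.mem_insert.1 this with h' | h'
    · exact absurd h' hxu
    · exact h'
  have hBinj : Function.Injective ℓB := by
    intro s t h
    apply Finset.map_injective eB
    exact Finset.Subset.antisymm (hBsub' s t (le_of_eq h)) (hBsub' t s (le_of_eq h.symm))
  have hBmono : ∀ s t : Finset ↥sB, s ⊆ t → ℓB s ⊆ ℓB t :=
    fun s t h => Finset.insert_subset_insert _ (Finset.map_subset_map.2 h)
  have hBsub : ∀ s t : Finset ↥sB, ℓB s ⊆ ℓB t → s ⊆ t :=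
    fun s t h => Finset.map_subset_map.1 (hBsub' s t h)
  have hBcard : ∀ s : Finset ↥sB, (ℓB s).card = s.card + 1 := by
    intro s
    simp only [hℓB]
    rw [Finset.card_insert_of_notMem (hBmapnot s), Finset.card_map]
  -- the lifts land in the independence complex of G
  have hΔA : ∀ s ∈ IndFaces (G.induce sA), ℓA s ∈ IndFaces G := by
    intro s hs x hx y hy hadj
    simp only [hℓA, Finset.mem_map, heA, Function.Embedding.coe_subtype] at hx hy
    obtain ⟨a, ha, rfl⟩ := hx
    obtain ⟨b, hb, rfl⟩ := hy
    exact hs a ha b hb (by simpa using hadj)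
  have hΔB : ∀ s ∈ IndFaces (G.induce sB), ℓB s ∈ IndFaces G := by
    intro s hs x hx y hy hadj
    simp only [hℓB] at hx hy
    rcases Finset.mem_insert.1 hx with rfl | hx' <;>
      rcases Finset.mem_insert.1 hy with h | hy'
    · exact G.irrefl (h ▸ hadj)
    · obtain ⟨b, hb, rfl⟩ := by
        simpa only [Finset.mem_map, heB, Function.Embedding.coe_subtype] using hy'
      have := b.2
      simp only [hsBdef, Set.mem_compl_iff, Set.mem_union, Set.mem_singleton_iff,
        SimpleGraph.mem_neighborSet, not_or] at this
      exact this.2 hadj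
    · obtain ⟨a, ha, rfl⟩ := by
        simpa only [Finset.mem_map, heB, Function.Embedding.coe_subtype] using hx'
      have := a.2
      simp only [hsBdef, Set.mem_compl_iff, Set.mem_union, Set.mem_singleton_iff,
        SimpleGraph.mem_neighborSet, not_or] at this
      exact this.2 (h ▸ hadj).symm
    · obtain ⟨a, ha, rfl⟩ := by
        simpa only [Finset.mem_map, heB, Function.Embedding.coe_subtype] using hx'
      obtain ⟨b, hb, rfl⟩ := by
        simpa only [Finset.mem_map, heB, Function.Embedding.coe_subtype] using hy'
      exact hs a ha b hb (by simpa using hadj)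
  -- the combined matching
  set Q₁ : Set (Finset V × Finset V) := liftPair ℓA '' P₁ with hQ₁def
  set Q₂ : Set (Finset V × Finset V) := liftPair ℓB '' P₂ with hQ₂def
  set Q : Set (Finset V × Finset V) := Q₁ ∪ Q₂ with hQdef
  have hQ1u : ∀ p ∈ Q₁, u ∉ p.1 ∧ u ∉ p.2 := by
    rintro p ⟨q, hq, rfl⟩
    exact ⟨hAnot q.1, hAnot q.2⟩
  have hQ2u : ∀ p ∈ Q₂, u ∈ p.1 ∧ u ∈ p.2 := by
    rintro p ⟨q, hq, rfl⟩
    exact ⟨Finset.mem_insert_self _ _, Finset.mem_insert_self _ _⟩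
  have hM₁ : IsPosetMatching (IndFaces G) Q₁ :=
    isPosetMatching_image hAinj hAmono hAcard hΔA hP₁.1
  have hM₂ : IsPosetMatching (IndFaces G) Q₂ :=
    isPosetMatching_image hBinj hBmono hBcard hΔB hP₂.1
  have hQmatch : IsPosetMatching (IndFaces G) Q := by
    constructor
    · rintro p (hp | hp)
      · exact hM₁.1 p hp
      · exact hM₂.1 p hp
    · rintro p (hp | hp) q (hq | hq) hne
      · exact hM₁.2 p hp q hq hne
      · refine ⟨?_, ?_, ?_, ?_⟩ <;> intro h
        · exact (hQ1u p hp).1 (h ▸ (hQ2u q hq).1)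
        · exact (hQ1u p hp).1 (h ▸ (hQ2u q hq).2)
        · exact (hQ1u p hp).2 (h ▸ (hQ2u q hq).1)
        · exact (hQ1u p hp).2 (h ▸ (hQ2u q hq).2)
      · refine ⟨?_, ?_, ?_, ?_⟩ <;> intro h
        · exact (hQ1u q hq).1 (h ▸ (hQ2u p hp).1)
        · exact (hQ1u q hq).2 (h ▸ (hQ2u p hp).1)
        · exact (hQ1u q hq).1 (h ▸ (hQ2u p hp).2)
        · exact (hQ1u q hq).2 (h ▸ (hQ2u p hp).2)
      · exact hM₂.2 p hp q hq hne
  -- acyclicity via the cluster-lemma argument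
  have hQacyc : ¬ MatchingHasCycle Q := by
    rintro ⟨n, hn, f, hfQ, hinjf, hchain, hwrap⟩
    have step : ∀ i, i + 1 < n → f i ∈ Q₁ → f (i + 1) ∈ Q₁ := by
      intro i h hi
      rcases hfQ (i + 1) h with h' | h'
      · exact h'
      · exact absurd ((hchain i h).subset ((hQ2u _ h').1)) (hQ1u _ hi).2
    have wrapstep : f (n - 1) ∈ Q₁ → f 0 ∈ Q₁ := by
      intro hi
      rcases hfQ 0 (by omega) with h' | h'
      · exact h'
      · exact absurd (hwrap.subset ((hQ2u _ h').1)) (hQ1u _ hi).2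
    by_cases h0 : f 0 ∈ Q₁
    · have hall : ∀ i < n, f i ∈ Q₁ := by
        intro i
        induction i with
        | zero => intro _; exact h0
        | succ m ih => intro h; exact step m h (ih (by omega))
      exact hP₁.2 (cycle_transfer hAsub hn hall hinjf hchain hwrap)
    · have hall : ∀ i < n, f i ∈ Q₂ := by
        intro i hi
        rcases hfQ i hi with h | h
        · exfalso
          apply h0
          have fwd : ∀ k, i ≤ k → k < n → f k ∈ Q₁ := by
            intro k
            induction k with
            | zero =>
              intro hik _
              have hi0 : i = 0 := by omega
              exact hi0 ▸ h
            | succ m ih =>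
              intro him hmn
              rcases Nat.eq_or_lt_of_le him with he | hlt
              · exact he ▸ h
              · exact step m hmn (ih (by omega) (by omega))
          exact wrapstep (fwd (n - 1) (by omega) (by omega))
        · exact h
      exact hP₂.2 (cycle_transfer hBsub hn hall hinjf hchain hwrap)
  -- critical cells of Q come from critical cells of P₁ and P₂
  set C₁ := criticalSet (IndFaces (G.induce sA)) P₁ with hC₁def
  set C₂ := criticalSet (IndFaces (G.induce sB)) P₂ with hC₂def
  have hcrit : criticalSet (IndFaces G) Q ⊆ (ℓA '' C₁) ∪ (ℓB '' C₂) := by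
    intro s hs
    obtain ⟨hsF, hscrit⟩ := hs
    by_cases hu : u ∈ s
    · right
      have hsubB : ∀ v ∈ s.erase u, v ∈ sB := by
        intro v hv
        have hv1 : v ≠ u := Finset.ne_of_mem_erase hv
        have hv2 : v ∈ s := Finset.mem_of_mem_erase hv
        simp only [hsBdef, Set.mem_compl_iff, Set.mem_union, Set.mem_singleton_iff,
          SimpleGraph.mem_neighborSet, not_or]
        exact ⟨hv1, hsF u hu v hv2⟩
      set s' : Finset ↥sB := (s.erase u).subtype (· ∈ sB) with hs'def
      have hmap : ℓB s' = s := by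
        show insert u (Finset.map eB s') = s
        rw [hs'def, heB, Finset.subtype_map, Finset.filter_true_of_mem hsubB]
        exact Finset.insert_erase hu
      refine ⟨s', ⟨?_, ?_⟩, hmap⟩
      · intro a ha b hb hadj
        have ha' : (a : V) ∈ s := Finset.mem_of_mem_erase (Finset.mem_subtype.1 ha)
        have hb' : (b : V) ∈ s := Finset.mem_of_mem_erase (Finset.mem_subtype.1 hb)
        exact hsF _ ha' _ hb' (by simpa using hadj)
      · intro p hp
        constructor
        · intro he
          have hss : s = (liftPair ℓB p).1 := by rw [← hmap, he]; rfl
          exact (hscrit (liftPair ℓB p) (Or.inr ⟨p, hp, rfl⟩)).1 hss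
        · intro he
          have hss : s = (liftPair ℓB p).2 := by rw [← hmap, he]; rfl
          exact (hscrit (liftPair ℓB p) (Or.inr ⟨p, hp, rfl⟩)).2 hss
    · left
      have hsubA : ∀ v ∈ s, v ∈ sA := by
        intro v hv
        simp only [hsAdef, Set.mem_setOf_eq]
        exact fun hc => hu (hc ▸ hv)
      set s' : Finset ↥sA := s.subtype (· ∈ sA) with hs'def
      have hmap : ℓA s' = s := by
        show Finset.map eA s' = s
        rw [hs'def, heA, Finset.subtype_map, Finset.filter_true_of_mem hsubA]
      refine ⟨s', ⟨?_, ?_⟩, hmap⟩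
      · intro a ha b hb hadj
        have ha' : (a : V) ∈ s := Finset.mem_subtype.1 ha
        have hb' : (b : V) ∈ s := Finset.mem_subtype.1 hb
        exact hsF _ ha' _ hb' (by simpa using hadj)
      · intro p hp
        constructor
        · intro he
          have hss : s = (liftPair ℓA p).1 := by rw [← hmap, he]; rfl
          exact (hscrit (liftPair ℓA p) (Or.inl ⟨p, hp, rfl⟩)).1 hss
        · intro he
          have hss : s = (liftPair ℓA p).2 := by rw [← hmap, he]; rfl
          exact (hscrit (liftPair ℓA p) (Or.inl ⟨p, hp, rfl⟩)).2 hss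
  -- count
  calc cInvariant G ≤ (criticalSet (IndFaces G) Q).ncard :=
        Nat.sInf_le ⟨Q, ⟨hQmatch, hQacyc⟩, rfl⟩
    _ ≤ ((ℓA '' C₁) ∪ (ℓB '' C₂)).ncard :=
        Set.ncard_le_ncard hcrit (Set.toFinite _)
    _ ≤ (ℓA '' C₁).ncard + (ℓB '' C₂).ncard := Set.ncard_union_le _ _
    _ = C₁.ncard + C₂.ncard := by
        rw [Set.ncard_image_of_injective _ hAinj, Set.ncard_image_of_injective _ hBinj]
    _ = _ := by rw [hc₁, hc₂]
end

section
/- If G is a forest (a finite graph with no cycles), then c(G) ≤ 1. -/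
open Classical

variable {V : Type*}

lemma exists_leaf_aux {V : Type*} [Fintype V] {G : SimpleGraph V} (hG : G.IsAcyclic) (S : Finset V)
    (hE : ∃ a ∈ S, ∃ b ∈ S, G.Adj a b) :
    ∃ v ∈ S, ∃ u ∈ S, G.Adj v u ∧ ∀ w ∈ S, G.Adj v w → w = u := by
  classical
  obtain ⟨a0, ha0, b0, hb0, hab0⟩ := hE
  set A : Set ℕ := {n | ∃ (a b : V) (p : G.Walk a b), p.IsPath ∧ (∀ x ∈ p.support, x ∈ S) ∧ p.length = n} with hA
  have h1 : 1 ∈ A := by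
    refine ⟨a0, b0, SimpleGraph.Walk.cons hab0 SimpleGraph.Walk.nil, ?_, ?_, rfl⟩
    · simp [hab0.ne]
    · intro x hx
      simp only [SimpleGraph.Walk.support_cons, SimpleGraph.Walk.support_nil,
        List.mem_cons, List.not_mem_nil, or_false] at hx
      rcases hx with rfl | rfl
      · exact ha0
      · exact hb0
  have hbdd : BddAbove A := by
    refine ⟨Fintype.card V, ?_⟩
    rintro n ⟨a, b, p, hp, -, rfl⟩
    exact le_of_lt hp.length_lt
  have hmem : sSup A ∈ A := Nat.sSup_mem ⟨1, h1⟩ hbdd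
  obtain ⟨a, b, p, hp, hS, hlen⟩ := hmem
  have hn1 : 1 ≤ p.length := by rw [hlen]; exact le_csSup hbdd h1
  cases p with
  | nil => simp at hn1
  | @cons _ c _ h q =>
    refine ⟨a, hS a (SimpleGraph.Walk.start_mem_support _), c,
      hS c (by simp), h, ?_⟩
    intro w hwS haw
    by_contra hwc
    have hpath := hp
    rw [SimpleGraph.Walk.cons_isPath_iff] at hpath
    by_cases hws : w ∈ (SimpleGraph.Walk.cons h q).support
    · -- build a cycle, contradiction with acyclicity
      set r := (SimpleGraph.Walk.cons h q).takeUntil w hws with hr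
      have hrp : r.IsPath := hp.takeUntil hws
      have hcyc : (SimpleGraph.Walk.cons haw r.reverse).IsCycle := by
        rw [SimpleGraph.Walk.cons_isCycle_iff]
        refine ⟨hrp.reverse, ?_⟩
        rw [SimpleGraph.Walk.edges_reverse, List.mem_reverse]
        intro hmem
        have hmem' : s(a, w) ∈ (SimpleGraph.Walk.cons h q).edges :=
          SimpleGraph.Walk.edges_takeUntil_subset _ hws hmem
        rw [SimpleGraph.Walk.edges_cons] at hmem'
        rcases List.mem_cons.mp hmem' with heq | hmem''
        · rw [Sym2.eq_iff] at heq
          rcases heq with ⟨-, rfl⟩ | ⟨rfl, rfl⟩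
          · exact hwc rfl
          · exact hwc rfl
        · exact hpath.2 (SimpleGraph.Walk.fst_mem_support_of_mem_edges q hmem'')
      exact hG _ hcyc
    · -- extend the path, contradiction with maximality
      have hext : (SimpleGraph.Walk.cons h q).length + 1 ∈ A := by
        refine ⟨w, b, SimpleGraph.Walk.cons haw.symm (SimpleGraph.Walk.cons h q), ?_, ?_, by simp⟩
        · rw [SimpleGraph.Walk.cons_isPath_iff]; exact ⟨hp, hws⟩
        · intro x hx
          rw [SimpleGraph.Walk.support_cons, List.mem_cons] at hx
          rcases hx with rfl | hx
          · exact hwS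
          · exact hS x hx
      have := le_csSup hbdd hext
      omega

lemma indep_mono {G : SimpleGraph V} {s t : Finset V} (h : t ⊆ s) (hs : IsIndepSet G s) :
    IsIndepSet G t := fun u hu v hv => hs u (h hu) v (h hv)

lemma insert_ssubset_insert_rev {u : V} {x y : Finset V} (hux : u ∉ x) (huy : u ∉ y)
    (h : insert u x ⊂ insert u y) : x ⊂ y := by
  constructor
  · intro a ha
    have : a ∈ insert u y := h.1 (Finset.mem_insert_of_mem ha)
    rcases Finset.mem_insert.mp this with rfl | h'
    · exact absurd ha hux
    · exact h'
  · intro hyx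
    exact h.2 (Finset.insert_subset_insert u hyx)

lemma insert_inj_of_not_mem {u : V} {x y : Finset V} (hux : u ∉ x) (huy : u ∉ y)
    (h : insert u x = insert u y) : x = y := by
  rw [← Finset.erase_insert hux, ← Finset.erase_insert huy, h]

/-- No cycle can consist entirely of pairs of the form `(σ, insert v σ)` with `v ∉ σ`. -/
lemma chain_aux {v : V} {n : ℕ} (hn : 2 ≤ n) {f : ℕ → Finset V × Finset V}
    (hform : ∀ i < n, v ∉ (f i).1 ∧ (f i).2 = insert v (f i).1)
    (hinj : Set.InjOn f (Set.Iio n))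
    (hstep : ∀ i, i + 1 < n → (f (i + 1)).1 ⊂ (f i).2)
    (hwrap : (f 0).1 ⊂ (f (n - 1)).2) : False := by
  have hsub : ∀ i j : ℕ, i < n → j < n → v ∉ (f j).1 → (f j).1 ⊂ insert v (f i).1 →
      (f j).1 ⊆ (f i).1 := by
    intro i j _ _ hv hss x hx
    rcases Finset.mem_insert.mp (hss.1 hx) with rfl | h'
    · exact absurd hx hv
    · exact h'
  have step1 : ∀ i, i + 1 < n → (f (i + 1)).1 ⊆ (f i).1 := by
    intro i hi
    have h2 := (hform i (by omega)).2
    exact hsub i (i+1) (by omega) hi (hform (i+1) hi).1 (h2 ▸ hstep i hi)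
  have chain : ∀ j, j < n → ∀ i, i ≤ j → (f j).1 ⊆ (f i).1 := by
    intro j
    induction j with
    | zero =>
      intro _ i hi
      obtain rfl : i = 0 := Nat.le_zero.mp hi
      exact subset_rfl
    | succ k ihk =>
      intro hk i hi
      rcases Nat.lt_or_ge i (k + 1) with hlt | hge
      · exact (step1 k hk).trans (ihk (by omega) i (by omega))
      · have : i = k + 1 := by omega
        subst this; exact subset_rfl
  have hwrap' : (f 0).1 ⊆ (f (n - 1)).1 := by
    have h2 := (hform (n - 1) (by omega)).2
    exact hsub (n-1) 0 (by omega) (by omega) (hform 0 (by omega)).1 (h2 ▸ hwrap)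
  have e1 : (f 1).1 = (f 0).1 := by
    apply Finset.Subset.antisymm
    · exact chain 1 (by omega) 0 (by omega)
    · exact hwrap'.trans (chain (n - 1) (by omega) 1 (by omega))
  have hfe : f 1 = f 0 := by
    have h20 := (hform 0 (by omega)).2
    have h21 := (hform 1 (by omega)).2
    exact Prod.ext e1 (by rw [h21, h20, e1])
  have : (1 : ℕ) = 0 := hinj (Set.mem_Iio.mpr (by omega)) (Set.mem_Iio.mpr (by omega)) hfe
  omega

lemma key_matching {V : Type*} [Fintype V] (G : SimpleGraph V) (hG : G.IsAcyclic) (S : Finset V) :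
    ∃ P : Set (Finset V × Finset V),
      IsAcyclicMatching (IndFaces G) P ∧
      (∀ p ∈ P, p.1 ⊆ S ∧ p.2 ⊆ S) ∧
      {s : Finset V | s ∈ IndFaces G ∧ s ⊆ S ∧ ∀ p ∈ P, s ≠ p.1 ∧ s ≠ p.2}.ncard ≤ 1 := by
  classical
  induction' S using Finset.strongInductionOn with S ih
  by_cases hE : ∃ a ∈ S, ∃ b ∈ S, G.Adj a b
  · -- there is an edge inside S : use a leaf
    obtain ⟨v, hvS, u, huS, hadj, hleaf⟩ := exists_leaf_aux hG S hE
    have hvu : v ≠ u := hadj.ne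
    set S' : Finset V := S.filter (fun x => x ≠ u ∧ ¬ G.Adj u x) with hS'def
    have hmemS' : ∀ x, x ∈ S' ↔ x ∈ S ∧ x ≠ u ∧ ¬ G.Adj u x := by
      intro x; rw [hS'def]; exact Finset.mem_filter
    have hS'sub : S' ⊆ S := fun x hx => ((hmemS' x).mp hx).1
    have huS' : u ∉ S' := fun hc => ((hmemS' u).mp hc).2.1 rfl
    have hvS' : v ∉ S' := fun hc => ((hmemS' v).mp hc).2.2 hadj.symm
    have hS'ss : S' ⊂ S := (Finset.ssubset_iff_of_subset hS'sub).mpr ⟨u, huS, huS'⟩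
    obtain ⟨P', ⟨⟨hP'cover, hP'disj⟩, hP'acyc⟩, hP'sub, hP'crit⟩ := ih S' hS'ss
    have hinsv : ∀ σ : Finset V, σ ∈ IndFaces G → σ ⊆ S → u ∉ σ → insert v σ ∈ IndFaces G := by
      intro σ hind hσS huσ x hx y hy hxy
      rcases Finset.mem_insert.mp hx with rfl | hx' <;> rcases Finset.mem_insert.mp hy with rfl | hy'
      · exact hxy.ne rfl
      · exact huσ ((hleaf y (hσS hy') hxy) ▸ hy')
      · exact huσ ((hleaf x (hσS hx') hxy.symm) ▸ hx')
      · exact hind x hx' y hy' hxy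
    have hinsu : ∀ σ : Finset V, σ ∈ IndFaces G → σ ⊆ S' → insert u σ ∈ IndFaces G := by
      intro σ hind hσS x hx y hy hxy
      rcases Finset.mem_insert.mp hx with rfl | hx' <;> rcases Finset.mem_insert.mp hy with rfl | hy'
      · exact hxy.ne rfl
      · exact ((hmemS' y).mp (hσS hy')).2.2 hxy
      · exact ((hmemS' x).mp (hσS hx')).2.2 hxy.symm
      · exact hind x hx' y hy' hxy
    set A : Set (Finset V × Finset V) :=
      {p | ∃ σ : Finset V, σ ∈ IndFaces G ∧ σ ⊆ S ∧ v ∉ σ ∧ u ∉ σ ∧ p = (σ, insert v σ)} with hAdef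
    set B : Set (Finset V × Finset V) :=
      {p | ∃ q ∈ P', p = (insert u q.1, insert u q.2)} with hBdef
    have hAelim : ∀ p ∈ A, ∃ σ : Finset V,
        σ ∈ IndFaces G ∧ σ ⊆ S ∧ v ∉ σ ∧ u ∉ σ ∧ p = (σ, insert v σ) := by
      intro p hp; rw [hAdef] at hp; exact hp
    have hAintro : ∀ σ : Finset V, σ ∈ IndFaces G → σ ⊆ S → v ∉ σ → u ∉ σ →
        (σ, insert v σ) ∈ A := by
      intro σ h1 h2 h3 h4; rw [hAdef]; exact ⟨σ, h1, h2, h3, h4, rfl⟩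
    have hBelim : ∀ p ∈ B, ∃ q, q ∈ P' ∧ p.1 = insert u q.1 ∧ p.2 = insert u q.2 ∧
        u ∉ q.1 ∧ u ∉ q.2 ∧ v ∉ q.1 ∧ v ∉ q.2 := by
      intro p hp; rw [hBdef] at hp
      obtain ⟨q, hq, rfl⟩ := hp
      exact ⟨q, hq, rfl, rfl, fun hc => huS' ((hP'sub q hq).1 hc),
        fun hc => huS' ((hP'sub q hq).2 hc),
        fun hc => hvS' ((hP'sub q hq).1 hc), fun hc => hvS' ((hP'sub q hq).2 hc)⟩
    have hBintro : ∀ q ∈ P', (insert u q.1, insert u q.2) ∈ B := by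
      intro q hq; rw [hBdef]; exact ⟨q, hq, rfl⟩
    have hAfact : ∀ p ∈ A, v ∉ p.1 ∧ p.2 = insert v p.1 ∧ u ∉ p.1 ∧ u ∉ p.2 := by
      intro p hp
      obtain ⟨σ, h1, h2, h3, h4, rfl⟩ := hAelim p hp
      exact ⟨h3, rfl, h4, fun hc => (Finset.mem_insert.mp hc).elim (fun h => hvu h.symm) h4⟩
    have hBu : ∀ p ∈ B, u ∈ p.1 ∧ u ∈ p.2 ∧ v ∉ p.1 ∧ v ∉ p.2 := by
      intro p hp
      obtain ⟨q, hq, e1, e2, hu1, hu2, hv1, hv2⟩ := hBelim p hp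
      rw [e1, e2]
      exact ⟨Finset.mem_insert_self _ _, Finset.mem_insert_self _ _,
        fun hc => (Finset.mem_insert.mp hc).elim hvu hv1,
        fun hc => (Finset.mem_insert.mp hc).elim hvu hv2⟩
    refine ⟨A ∪ B, ⟨⟨?_, ?_⟩, ?_⟩, ?_, ?_⟩
    · -- cover conditions
      rintro p (hpA | hpB)
      · obtain ⟨σ, h1, h2, h3, h4, rfl⟩ := hAelim p hpA
        exact ⟨h1, hinsv σ h1 h2 h4, Finset.subset_insert _ _, Finset.card_insert_of_notMem h3⟩
      · obtain ⟨q, hq, e1, e2, hu1, hu2, -, -⟩ := hBelim p hpB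
        obtain ⟨hi1, hi2, hsub, hcard⟩ := hP'cover q hq
        rw [e1, e2]
        refine ⟨hinsu q.1 hi1 (hP'sub q hq).1, hinsu q.2 hi2 (hP'sub q hq).2,
          Finset.insert_subset_insert u hsub, ?_⟩
        rw [Finset.card_insert_of_notMem hu1, Finset.card_insert_of_notMem hu2]
        omega
    · -- disjointness
      rintro p hp q hq hpq
      rcases hp with hpA | hpB <;> rcases hq with hqA | hqB
      · obtain ⟨σ, -, -, hv1, hu1, rfl⟩ := hAelim p hpA
        obtain ⟨τ, -, -, hv2, hu2, rfl⟩ := hAelim q hqA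
        have hστ : σ ≠ τ := fun h => hpq (by rw [h])
        refine ⟨hστ, fun h => hv1 ?_, fun h => hv2 ?_,
          fun h => hστ (insert_inj_of_not_mem hv1 hv2 h)⟩
        · rw [show σ = insert v τ from h]; exact Finset.mem_insert_self _ _
        · rw [← show insert v σ = τ from h]; exact Finset.mem_insert_self _ _
      · obtain ⟨hu1q, hu2q, -, -⟩ := hBu q hqB
        obtain ⟨-, -, hup1, hup2⟩ := hAfact p hpA
        exact ⟨fun h => hup1 (by rw [h]; exact hu1q), fun h => hup1 (by rw [h]; exact hu2q),
          fun h => hup2 (by rw [h]; exact hu1q), fun h => hup2 (by rw [h]; exact hu2q)⟩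
      · obtain ⟨hu1p, hu2p, -, -⟩ := hBu p hpB
        obtain ⟨-, -, huq1, huq2⟩ := hAfact q hqA
        exact ⟨fun h => huq1 (by rw [← h]; exact hu1p), fun h => huq2 (by rw [← h]; exact hu1p),
          fun h => huq1 (by rw [← h]; exact hu2p), fun h => huq2 (by rw [← h]; exact hu2p)⟩
      · obtain ⟨a, ha, e1p, e2p, hua1, hua2, -, -⟩ := hBelim p hpB
        obtain ⟨b, hb, e1q, e2q, hub1, hub2, -, -⟩ := hBelim q hqB
        have hab : a ≠ b := by
          rintro rfl
          exact hpq (Prod.ext (by rw [e1p, e1q]) (by rw [e2p, e2q]))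
        obtain ⟨d1, d2, d3, d4⟩ := hP'disj a ha b hb hab
        refine ⟨?_, ?_, ?_, ?_⟩
        · rw [e1p, e1q]; exact fun h => d1 (insert_inj_of_not_mem hua1 hub1 h)
        · rw [e1p, e2q]; exact fun h => d2 (insert_inj_of_not_mem hua1 hub2 h)
        · rw [e2p, e1q]; exact fun h => d3 (insert_inj_of_not_mem hua2 hub1 h)
        · rw [e2p, e2q]; exact fun h => d4 (insert_inj_of_not_mem hua2 hub2 h)
    · -- acyclicity
      rintro ⟨n, hn, f, hfP, hinj, hstep, hwrap⟩
      have hclass : ∀ i < n, f i ∈ A ∨ f i ∈ B := fun i hi => hfP i hi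
      have hAB : ∀ p, p ∈ A → p ∈ B → False := fun p hA hB => (hAfact p hA).2.2.1 (hBu p hB).1
      have stepA : ∀ i, i + 1 < n → f i ∈ A → f (i + 1) ∈ A := by
        intro i hi hAi
        rcases hclass (i + 1) hi with h | h
        · exact h
        · exact absurd ((hstep i hi).1 (hBu _ h).1) (hAfact _ hAi).2.2.2
      have wrapA : f (n - 1) ∈ A → f 0 ∈ A := by
        intro hAn
        rcases hclass 0 (by omega) with h | h
        · exact h
        · exact absurd (hwrap.1 (hBu _ h).1) (hAfact _ hAn).2.2.2
      rcases hclass 0 (by omega) with h0 | h0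
      · have allA : ∀ i, i < n → f i ∈ A := by
          intro i
          induction i with
          | zero => intro _; exact h0
          | succ k ihk => intro hk; exact stepA k hk (ihk (by omega))
        exact chain_aux hn
          (fun i hi => ⟨(hAfact _ (allA i hi)).1, (hAfact _ (allA i hi)).2.1⟩) hinj hstep hwrap
      · have allB : ∀ i, i < n → f i ∈ B := by
          intro i hi
          rcases hclass i hi with hA0 | hB0
          · exfalso
            have prop : ∀ j, i ≤ j → j < n → f j ∈ A := by
              intro j
              induction j with
              | zero =>
                intro hij _
                obtain rfl : i = 0 := Nat.le_zero.mp hij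
                exact hA0
              | succ k ihk =>
                intro hij hk
                rcases Nat.lt_or_ge i (k + 1) with hlt | hge
                · exact stepA k hk (ihk (by omega) (by omega))
                · obtain rfl : i = k + 1 := by omega
                  exact hA0
            exact hAB _ (wrapA (prop (n - 1) (by omega) (by omega))) h0
          · exact hB0
        set F : ℕ → Finset V × Finset V := fun i => ((f i).1.erase u, (f i).2.erase u) with hF
        have hFu1 : ∀ i < n, u ∉ (F i).1 ∧ u ∉ (F i).2 ∧
            (f i).1 = insert u (F i).1 ∧ (f i).2 = insert u (F i).2 := by
          intro i hi
          obtain ⟨q, hq, e1, e2, hu1, hu2, -, -⟩ := hBelim _ (allB i hi)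
          have hq1 : (F i).1 = q.1 := by show (f i).1.erase u = q.1; rw [e1, Finset.erase_insert hu1]
          have hq2 : (F i).2 = q.2 := by show (f i).2.erase u = q.2; rw [e2, Finset.erase_insert hu2]
          rw [hq1, hq2]
          exact ⟨hu1, hu2, e1, e2⟩
        have hFmem : ∀ i < n, F i ∈ P' := by
          intro i hi
          obtain ⟨q, hq, e1, e2, hu1, hu2, -, -⟩ := hBelim _ (allB i hi)
          have : F i = q := Prod.ext
            (by show (f i).1.erase u = q.1; rw [e1, Finset.erase_insert hu1])
            (by show (f i).2.erase u = q.2; rw [e2, Finset.erase_insert hu2])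
          rw [this]; exact hq
        apply hP'acyc
        refine ⟨n, hn, F, hFmem, ?_, ?_, ?_⟩
        · intro i hi j hj hFij
          obtain ⟨-, -, ei1, ei2⟩ := hFu1 i (Set.mem_Iio.mp hi)
          obtain ⟨-, -, ej1, ej2⟩ := hFu1 j (Set.mem_Iio.mp hj)
          exact hinj hi hj (Prod.ext (by rw [ei1, ej1, hFij]) (by rw [ei2, ej2, hFij]))
        · intro i hi
          obtain ⟨hu1, -, e1, -⟩ := hFu1 (i + 1) hi
          obtain ⟨-, hu2, -, e2⟩ := hFu1 i (by omega)
          have hss := hstep i hi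
          rw [e1, e2] at hss
          exact insert_ssubset_insert_rev hu1 hu2 hss
        · obtain ⟨hu1, -, e1, -⟩ := hFu1 0 (by omega)
          obtain ⟨-, hu2, -, e2⟩ := hFu1 (n - 1) (by omega)
          have hss := hwrap
          rw [e1, e2] at hss
          exact insert_ssubset_insert_rev hu1 hu2 hss
    · -- pairs live inside S
      rintro p (hpA | hpB)
      · obtain ⟨σ, -, h2, -, -, rfl⟩ := hAelim p hpA
        exact ⟨h2, Finset.insert_subset hvS h2⟩
      · obtain ⟨q, hq, e1, e2, -, -, -, -⟩ := hBelim p hpB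
        rw [e1, e2]
        exact ⟨Finset.insert_subset huS ((hP'sub q hq).1.trans hS'sub),
          Finset.insert_subset huS ((hP'sub q hq).2.trans hS'sub)⟩
    · -- critical set bound
      have himg : {s : Finset V | s ∈ IndFaces G ∧ s ⊆ S ∧ ∀ p ∈ A ∪ B, s ≠ p.1 ∧ s ≠ p.2}
          = (fun t => insert u t) ''
            {s : Finset V | s ∈ IndFaces G ∧ s ⊆ S' ∧ ∀ p ∈ P', s ≠ p.1 ∧ s ≠ p.2} := by
        ext s
        simp only [Set.mem_setOf_eq, Set.mem_image]
        constructor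
        · rintro ⟨hsInd, hsS, hcrit⟩
          have hus : u ∈ s := by
            by_contra hus
            by_cases hvs : v ∈ s
            · refine (hcrit (s.erase v, s) (Or.inl (by
                have := hAintro (s.erase v) (indep_mono (Finset.erase_subset _ _) hsInd)
                  ((Finset.erase_subset _ _).trans hsS) (Finset.notMem_erase _ _)
                  (fun hc => hus (Finset.mem_of_mem_erase hc))
                rwa [Finset.insert_erase hvs] at this))).2 rfl
            · exact (hcrit (s, insert v s) (Or.inl (hAintro s hsInd hsS hvs hus))).1 rfl
          refine ⟨s.erase u, ⟨indep_mono (Finset.erase_subset _ _) hsInd, ?_, ?_⟩,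
            Finset.insert_erase hus⟩
          · intro x hx
            exact (hmemS' x).mpr ⟨hsS (Finset.mem_of_mem_erase hx), Finset.ne_of_mem_erase hx,
              fun hadj' => hsInd u hus x (Finset.mem_of_mem_erase hx) hadj'⟩
          · intro q hq
            constructor
            · intro hc
              exact (hcrit (insert u q.1, insert u q.2) (Or.inr (hBintro q hq))).1
                (by rw [← Finset.insert_erase hus, hc])
            · intro hc
              exact (hcrit (insert u q.1, insert u q.2) (Or.inr (hBintro q hq))).2
                (by rw [← Finset.insert_erase hus, hc])
        · rintro ⟨t, ⟨htInd, htS', hcrit'⟩, rfl⟩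
          have hut : u ∉ t := fun hc => huS' (htS' hc)
          refine ⟨hinsu t htInd htS', Finset.insert_subset huS (htS'.trans hS'sub), ?_⟩
          rintro p (hpA | hpB)
          · obtain ⟨-, -, hup1, hup2⟩ := hAfact p hpA
            exact ⟨fun hc => hup1 (by rw [← hc]; exact Finset.mem_insert_self u t),
              fun hc => hup2 (by rw [← hc]; exact Finset.mem_insert_self u t)⟩
          · obtain ⟨q, hq, e1, e2, hu1, hu2, -, -⟩ := hBelim p hpB
            constructor
            · intro hc
              rw [e1] at hc
              exact (hcrit' q hq).1 (insert_inj_of_not_mem hut hu1 hc)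
            · intro hc
              rw [e2] at hc
              exact (hcrit' q hq).2 (insert_inj_of_not_mem hut hu2 hc)
      rw [himg, Set.ncard_image_of_injOn]
      · exact hP'crit
      · intro a ha b hb hab
        exact insert_inj_of_not_mem (fun hc => huS' (ha.2.1 hc)) (fun hc => huS' (hb.2.1 hc)) hab
  · -- no edge inside S
    rcases Finset.eq_empty_or_nonempty S with rfl | ⟨v, hv⟩
    · refine ⟨∅, ⟨⟨fun p hp => absurd hp (Set.notMem_empty p),
        fun p hp => absurd hp (Set.notMem_empty p)⟩, ?_⟩,
        fun p hp => absurd hp (Set.notMem_empty p), ?_⟩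
      · rintro ⟨n, hn, f, hfP, -⟩
        exact absurd (hfP 0 (by omega)) (Set.notMem_empty _)
      · have hset : {s : Finset V | s ∈ IndFaces G ∧ s ⊆ (∅ : Finset V) ∧
            ∀ p ∈ (∅ : Set (Finset V × Finset V)), s ≠ p.1 ∧ s ≠ p.2} = {∅} := by
          ext s
          simp only [Set.mem_setOf_eq, Set.mem_singleton_iff, Finset.subset_empty]
          constructor
          · rintro ⟨-, rfl, -⟩; rfl
          · rintro rfl
            exact ⟨fun x hx => absurd hx (by simp), rfl,
              fun p hp => absurd hp (Set.notMem_empty p)⟩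
        rw [hset, Set.ncard_singleton]
    · have hindep : ∀ s : Finset V, s ⊆ S → s ∈ IndFaces G := by
        intro s hs x hx y hy hadj
        exact hE ⟨x, hs hx, y, hs hy, hadj⟩
      set P : Set (Finset V × Finset V) :=
        {p | ∃ σ : Finset V, σ ⊆ S ∧ v ∉ σ ∧ p = (σ, insert v σ)} with hPdef
      have hPelim : ∀ p ∈ P, ∃ σ : Finset V, σ ⊆ S ∧ v ∉ σ ∧ p = (σ, insert v σ) := by
        intro p hp; rw [hPdef] at hp; exact hp
      have hPintro : ∀ σ : Finset V, σ ⊆ S → v ∉ σ → (σ, insert v σ) ∈ P := by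
        intro σ h1 h2; rw [hPdef]; exact ⟨σ, h1, h2, rfl⟩
      refine ⟨P, ⟨⟨?_, ?_⟩, ?_⟩, ?_, ?_⟩
      · intro p hp
        obtain ⟨σ, hσS, hvσ, rfl⟩ := hPelim p hp
        exact ⟨hindep σ hσS, hindep _ (Finset.insert_subset hv hσS),
          Finset.subset_insert _ _, Finset.card_insert_of_notMem hvσ⟩
      · intro p hp q hq hpq
        obtain ⟨σ, hσS, hvσ, rfl⟩ := hPelim p hp
        obtain ⟨τ, hτS, hvτ, rfl⟩ := hPelim q hq
        have hστ : σ ≠ τ := fun h => hpq (by rw [h])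
        refine ⟨hστ, fun h => hvσ ?_, fun h => hvτ ?_,
          fun h => hστ (insert_inj_of_not_mem hvσ hvτ h)⟩
        · rw [show σ = insert v τ from h]; exact Finset.mem_insert_self _ _
        · rw [← show insert v σ = τ from h]; exact Finset.mem_insert_self _ _
      · rintro ⟨n, hn, f, hfP, hinj, hstep, hwrap⟩
        refine chain_aux (v := v) hn (fun i hi => ?_) hinj hstep hwrap
        obtain ⟨σ, hσS, hvσ, heq⟩ := hPelim _ (hfP i hi)
        rw [heq]
        exact ⟨hvσ, rfl⟩
      · intro p hp
        obtain ⟨σ, hσS, hvσ, rfl⟩ := hPelim p hp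
        exact ⟨hσS, Finset.insert_subset hv hσS⟩
      · have hset : {s : Finset V | s ∈ IndFaces G ∧ s ⊆ S ∧ ∀ p ∈ P, s ≠ p.1 ∧ s ≠ p.2}
            = (∅ : Set (Finset V)) := by
          ext s
          simp only [Set.mem_setOf_eq, Set.mem_empty_iff_false, iff_false, not_and]
          intro hsInd hsS hcrit
          by_cases hvs : v ∈ s
          · refine (hcrit (s.erase v, s) (by
              have := hPintro (s.erase v) ((Finset.erase_subset _ _).trans hsS)
                (Finset.notMem_erase _ _)
              rwa [Finset.insert_erase hvs] at this)).2 rfl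
          · exact (hcrit (s, insert v s) (hPintro s hsS hvs)).1 rfl
        rw [hset]
        simp

/-- If `G` is a forest, then `c(G) ≤ 1`. -/
theorem statement_5 {V : Type*} [Finite V] (G : SimpleGraph V) (h : G.IsAcyclic) :
    cInvariant G ≤ 1 := by
  have : Fintype V := Fintype.ofFinite V
  obtain ⟨P, hacyc, hsub, hcrit⟩ := key_matching G h Finset.univ
  have heq : criticalSet (IndFaces G) P
      = {s : Finset V | s ∈ IndFaces G ∧ s ⊆ Finset.univ ∧ ∀ p ∈ P, s ≠ p.1 ∧ s ≠ p.2} := by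
    ext s
    simp only [criticalSet, Set.mem_setOf_eq, Finset.subset_univ, true_and]
  have hle : cInvariant G ≤ (criticalSet (IndFaces G) P).ncard := Nat.sInf_le ⟨P, hacyc, rfl⟩
  rw [heq] at hle
  exact hle.trans hcrit
end

section
/- Let ℓ(n) be the Lucas numbers (ℓ(1)=1, ℓ(2)=3, ℓ(n)=ℓ(n-1)+ℓ(n-2)). For any sequence s = (s_1,...,s_n) with n ≥ 2 and each s_i ∈ {0,1,2}, the number of binary sequences (x_1,...,x_n) ∈ {0,1}^n satisfying x_i + x_{i+1} ≠ s_i for all 1 ≤ i < n and x_n + x_1 ≠ s_n is at most ℓ(n). -/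
/-!
Conditions with `s i = 1` force `x i = x (i + 1)`; each of the others forbids one
monochromatic pair. So the count is the trace of a product of `2 × 2` transfer matrices, each
the identity, the Fibonacci matrix `!![1, 1; 1, 0]`, or its conjugate `!![0, 1; 1, 1]` by the
swap. Products of `t ≥ 1` non-identity factors satisfy a family of linear bounds by Fibonacci
and Lucas numbers that is stable under left multiplication by either factor and contains
`trace ≤ ℓ(t)`. Identity factors only help, since the bounds weaken as `t` grows, and a product
of identities has trace `2 ≤ ℓ(n)`.
-/

/-- The Lucas numbers: `ℓ(n) = φ(n-1) + φ(n+1)` where `φ` is the Fibonacci sequence. -/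
def lucas : ℕ → ℕ
  | 0 => 2
  | n + 1 => Nat.fib n + Nat.fib (n + 2)

open Finset Matrix Nat

section WalkCount

variable {R ι : Type*} [CommSemiring R] [Fintype ι] [DecidableEq ι]

theorem Matrix.prod_ofFn_apply {m : ℕ} (M : Fin m → Matrix ι ι R) (a b : ι) :
    (List.ofFn M).prod a b =
      ∑ x : Fin (m + 1) → ι with x 0 = a ∧ x (Fin.last m) = b,
        ∏ i, M i (x i.castSucc) (x i.succ) := by
  induction m generalizing a with
  | zero =>
    rw [List.ofFn_zero, List.prod_nil, one_apply, sum_filter,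
      ← (Equiv.funUnique (Fin 1) ι).symm.sum_comp]
    simp [Fin.last, ite_and]
  | succ m ih =>
    rw [List.ofFn_succ, List.prod_cons, mul_apply, sum_filter,
      ← (Fin.consEquiv fun _ => ι).sum_comp, Fintype.sum_prod_type]
    simp_rw [ih, mul_sum, sum_filter]
    rw [sum_comm]
    simp [Fin.prod_univ_succ, ite_and]

theorem Matrix.trace_prod_ofFn {n : ℕ} (M : Fin (n + 1) → Matrix ι ι R) :
    trace (List.ofFn M).prod = ∑ x : Fin (n + 1) → ι, ∏ i, M i (x i) (x (i + 1)) := by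
  have snoc_succ (y : Fin (n + 1) → ι) (i : Fin (n + 1)) :
      (Fin.snoc y (y 0) : Fin (n + 2) → ι) i.succ = y (i + 1) := by
    induction i using Fin.lastCases with
    | last => simp
    | cast j => rw [Fin.succ_castSucc, Fin.snoc_castSucc, Fin.coeSucc_eq_succ]
  simp_rw [trace, diag, prod_ofFn_apply, sum_filter]
  rw [sum_comm, ← (Fin.snocEquiv fun _ => ι).sum_comp, Fintype.sum_prod_type_right]
  refine sum_congr rfl fun y _ => ?_
  simp [ite_and, snoc_succ]

end WalkCount

def transferMatrix (c : Fin 3) : Matrix (Fin 2) (Fin 2) ℕ :=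
  Matrix.of fun a b => if (a : ℕ) + b ≠ c then 1 else 0

theorem transferMatrix_one : transferMatrix 1 = 1 := by
  ext a b
  fin_cases a <;> fin_cases b <;> rfl

theorem ncard_eq_trace_prod_transferMatrix {m : ℕ} (s : Fin (m + 1) → Fin 3) :
    {x : Fin (m + 1) → Fin 2 | ∀ i, (x i : ℕ) + x (i + 1) ≠ s i}.ncard =
      trace ((List.ofFn s).map transferMatrix).prod := by
  rw [List.map_ofFn, trace_prod_ofFn, Set.ncard_eq_toFinset_card', Set.toFinset_ofPred,
    card_eq_sum_ones, sum_filter]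
  refine sum_congr rfl fun x _ => ?_
  simp only [Function.comp_apply, transferMatrix, of_apply, prod_boole, mem_univ, true_imp_iff]

/-- Each bound is attained by some product of `t` factors `!![1, 1; 1, 0]` or `!![0, 1; 1, 1]`. -/
def IsLucasBounded (t : ℕ) (M : Matrix (Fin 2) (Fin 2) ℕ) : Prop :=
  (∀ i j, M i j ≤ fib (t + 1)) ∧ (∀ j, M 0 j + M 1 j ≤ fib (t + 2)) ∧
    M 0 0 + M 1 1 ≤ lucas t ∧ M 0 0 + M 0 1 + M 1 0 ≤ lucas (t + 1) ∧
    M 0 1 + M 1 0 + M 1 1 ≤ lucas (t + 1)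

theorem isLucasBounded_transferMatrix {c : Fin 3} (hc : c ≠ 1) :
    IsLucasBounded 1 (transferMatrix c) := by
  fin_cases c <;> simp_all [IsLucasBounded, Fin.forall_fin_two, transferMatrix, lucas, fib_add_two]

namespace IsLucasBounded

variable {M : Matrix (Fin 2) (Fin 2) ℕ}

theorem succ {k : ℕ} (h : IsLucasBounded (k + 1) M) : IsLucasBounded (k + 2) M := by
  simp only [IsLucasBounded, Fin.forall_fin_two, lucas, add_assoc, Nat.reduceAdd] at h ⊢
  have : fib (k + 2) = fib k + fib (k + 1) := fib_add_two
  have : fib (k + 3) = fib (k + 1) + fib (k + 2) := fib_add_two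
  have : fib (k + 4) = fib (k + 2) + fib (k + 3) := fib_add_two
  have := fib_le_fib_succ (n := k)
  omega

theorem mono {t t' : ℕ} (h : IsLucasBounded t M) (ht : 1 ≤ t) (htt' : t ≤ t') :
    IsLucasBounded t' M := by
  induction t', htt' using Nat.le_induction with
  | base => exact h
  | succ t' ht' ih =>
    obtain ⟨k, rfl⟩ : ∃ k, t' = k + 1 := ⟨t' - 1, by omega⟩
    exact ih.succ

theorem transferMatrix_mul {k : ℕ} {c : Fin 3} (h : IsLucasBounded (k + 1) M) (hc : c ≠ 1) :
    IsLucasBounded (k + 2) (transferMatrix c * M) := by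
  simp only [IsLucasBounded, Fin.forall_fin_two, lucas, add_assoc, Nat.reduceAdd] at h ⊢
  have : fib (k + 2) = fib k + fib (k + 1) := fib_add_two
  have : fib (k + 3) = fib (k + 1) + fib (k + 2) := fib_add_two
  have : fib (k + 4) = fib (k + 2) + fib (k + 3) := fib_add_two
  have := fib_le_fib_succ (n := k)
  fin_cases c <;> simp_all [mul_apply, Fin.sum_univ_two, transferMatrix] <;> omega

end IsLucasBounded

theorem prod_map_transferMatrix_eq_one_or_isLucasBounded (l : List (Fin 3)) :
    (l.map transferMatrix).prod = 1 ∨ IsLucasBounded l.length (l.map transferMatrix).prod := by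
  induction l with
  | nil => exact .inl rfl
  | cons c l ih =>
    rw [List.map_cons, List.prod_cons, List.length_cons]
    by_cases hc : c = 1
    · rw [hc, transferMatrix_one, one_mul]
      rcases ih with h | h
      · exact .inl h
      · cases l with
        | nil => exact .inl rfl
        | cons => exact .inr h.succ
    · right
      rcases ih with h | h
      · rw [h, mul_one]
        exact (isLucasBounded_transferMatrix hc).mono le_rfl (by omega)
      · cases l with
        | nil => simpa using isLucasBounded_transferMatrix hc
        | cons => exact h.transferMatrix_mul hc

theorem two_le_lucas {n : ℕ} (hn : 2 ≤ n) : 2 ≤ lucas n := by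
  obtain ⟨k, rfl⟩ : ∃ k, n = k + 2 := ⟨n - 2, by omega⟩
  calc 2 = fib 3 := rfl
    _ ≤ fib (k + 3) := fib_mono (by omega)
    _ ≤ lucas (k + 2) := Nat.le_add_left _ _

theorem trace_prod_map_transferMatrix_le_lucas {l : List (Fin 3)} (hl : 2 ≤ l.length) :
    trace (l.map transferMatrix).prod ≤ lucas l.length := by
  rcases prod_map_transferMatrix_eq_one_or_isLucasBounded l with h | h
  · rw [h, trace_one, Fintype.card_fin]
    exact two_le_lucas hl
  · rw [trace_fin_two]
    exact h.2.2.1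

/-- For any sequence `s : Fin n → {0,1,2}` with `n ≥ 2`, the number of binary sequences
`x ∈ {0,1}ⁿ` with `x_i + x_{i+1} ≠ s_i` cyclically is at most the Lucas number `ℓ(n)`. -/
theorem statement_9 (n : ℕ) (hn : 2 ≤ n) (s : Fin n → Fin 3) :
    {x : Fin n → Fin 2 |
        ∀ i : Fin n, ((x i : ℕ) + (x (i + ⟨1, by omega⟩) : ℕ)) ≠ (s i : ℕ)}.ncard
      ≤ lucas n := by
  obtain ⟨m, rfl⟩ : ∃ m, n = m + 2 := ⟨n - 2, by omega⟩
  have hone : (⟨1, by omega⟩ : Fin (m + 2)) = 1 := rfl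
  simp_rw [hone]
  rw [ncard_eq_trace_prod_transferMatrix]
  simpa using trace_prod_map_transferMatrix_le_lucas (l := List.ofFn s) (by simp)
end

section
/- Let A = [[1,1],[1,0]] and B = [[0,1],[1,1]]. For every n ≥ 2 and every product M = A_1 A_2 ··· A_n where each A_i ∈ {A, B}, the trace of M is at most the Lucas number ℓ(n) = φ(n-1) + φ(n+1), where φ is the Fibonacci sequence. -/
/-- The Fibonacci matrix `A = [[1,1],[1,0]]`. -/
def fibA : Matrix (Fin 2) (Fin 2) ℤ := !![1, 1; 1, 0]

/-- The matrix `B = [[0,1],[1,1]]`, the anti-diagonal transpose of `A`. -/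
def fibB : Matrix (Fin 2) (Fin 2) ℤ := !![0, 1; 1, 1]

/-- The Fibonacci numbers extended to all integers:
`φ(-n) = (-1)^{n+1} φ(n)`. -/
def intFib (n : ℤ) : ℤ :=
  if 0 ≤ n then Nat.fib n.toNat else (-1) ^ ((-n).toNat + 1) * (Nat.fib (-n).toNat : ℤ)

namespace Statement11Aux

noncomputable def F (k : ℕ) : ℤ := (Nat.fib k : ℤ)

lemma F_nonneg (k : ℕ) : 0 ≤ F k := Int.natCast_nonneg _

lemma F_rec (k : ℕ) : F (k + 2) = F k + F (k + 1) := by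
  unfold F
  rw [Nat.fib_add_two]
  push_cast
  ring

/-- The inductive invariant for a product of `n` matrices from `{A, B}`. -/
def Inv (n : ℕ) (M : Matrix (Fin 2) (Fin 2) ℤ) : Prop :=
  0 ≤ M 0 0 ∧ 0 ≤ M 0 1 ∧ 0 ≤ M 1 0 ∧ 0 ≤ M 1 1 ∧
  M 0 0 ≤ F (n+1) ∧ M 0 1 ≤ F (n+1) ∧ M 1 0 ≤ F (n+1) ∧ M 1 1 ≤ F (n+1) ∧
  M 0 0 + M 0 1 ≤ F (n+2) ∧ M 1 0 + M 1 1 ≤ F (n+2) ∧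
  M 0 0 + M 1 0 ≤ F (n+2) ∧ M 0 1 + M 1 1 ≤ F (n+2) ∧
  M 0 0 + M 0 1 + M 1 0 + M 1 1 ≤ F (n+3) ∧
  M 0 0 + M 1 1 ≤ F (n-1) + F (n+1) ∧
  M 0 0 + M 0 1 + M 1 0 ≤ F n + F (n+2) ∧
  M 0 1 + M 1 0 + M 1 1 ≤ F n + F (n+2)

lemma mulA (M : Matrix (Fin 2) (Fin 2) ℤ) :
    fibA * M = !![M 0 0 + M 1 0, M 0 1 + M 1 1; M 0 0, M 0 1] := by
  ext i j
  fin_cases i <;> fin_cases j <;>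
    simp [fibA, Matrix.mul_apply, Fin.sum_univ_two]

lemma mulB (M : Matrix (Fin 2) (Fin 2) ℤ) :
    fibB * M = !![M 1 0, M 1 1; M 0 0 + M 1 0, M 0 1 + M 1 1] := by
  ext i j
  fin_cases i <;> fin_cases j <;>
    simp [fibB, Matrix.mul_apply, Fin.sum_univ_two]

lemma invA : Inv 1 fibA := by
  simp only [Inv, fibA, F]
  norm_num [Matrix.cons_val_zero, Matrix.cons_val_one]

lemma invB : Inv 1 fibB := by
  simp only [Inv, fibB, F]
  norm_num [Matrix.cons_val_zero, Matrix.cons_val_one]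

lemma stepA {n : ℕ} {M : Matrix (Fin 2) (Fin 2) ℤ} (h : Inv n M) :
    Inv (n + 1) (fibA * M) := by
  obtain ⟨h1, h2, h3, h4, h5, h6, h7, h8, h9, h10, h11, h12, h13, h14, h15, h16⟩ := h
  have e00 : (fibA * M) 0 0 = M 0 0 + M 1 0 := by rw [mulA]; rfl
  have e01 : (fibA * M) 0 1 = M 0 1 + M 1 1 := by rw [mulA]; rfl
  have e10 : (fibA * M) 1 0 = M 0 0 := by rw [mulA]; rfl
  have e11 : (fibA * M) 1 1 = M 0 1 := by rw [mulA]; rfl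
  have r1 := F_rec n
  have r2 := F_rec (n + 1)
  have r3 := F_rec (n + 2)
  have p1 := F_nonneg n
  have p2 := F_nonneg (n + 1)
  unfold Inv
  rw [e00, e01, e10, e11, Nat.add_sub_cancel]
  refine ⟨?_, ?_, ?_, ?_, ?_, ?_, ?_, ?_, ?_, ?_, ?_, ?_, ?_, ?_, ?_, ?_⟩ <;> linarith

lemma stepB {n : ℕ} {M : Matrix (Fin 2) (Fin 2) ℤ} (h : Inv n M) :
    Inv (n + 1) (fibB * M) := by
  obtain ⟨h1, h2, h3, h4, h5, h6, h7, h8, h9, h10, h11, h12, h13, h14, h15, h16⟩ := h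
  have e00 : (fibB * M) 0 0 = M 1 0 := by rw [mulB]; rfl
  have e01 : (fibB * M) 0 1 = M 1 1 := by rw [mulB]; rfl
  have e10 : (fibB * M) 1 0 = M 0 0 + M 1 0 := by rw [mulB]; rfl
  have e11 : (fibB * M) 1 1 = M 0 1 + M 1 1 := by rw [mulB]; rfl
  have r1 := F_rec n
  have r2 := F_rec (n + 1)
  have r3 := F_rec (n + 2)
  have p1 := F_nonneg n
  have p2 := F_nonneg (n + 1)
  unfold Inv
  rw [e00, e01, e10, e11, Nat.add_sub_cancel]
  refine ⟨?_, ?_, ?_, ?_, ?_, ?_, ?_, ?_, ?_, ?_, ?_, ?_, ?_, ?_, ?_, ?_⟩ <;> linarith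

lemma inv_prod : ∀ (l : List (Matrix (Fin 2) (Fin 2) ℤ)),
    (∀ x ∈ l, x = fibA ∨ x = fibB) → l ≠ [] → Inv l.length l.prod
  | [], _, hne => absurd rfl hne
  | [x], hx, _ => by
      rcases hx x (by simp) with h | h <;>
        simpa [h] using (by first | exact invA | exact invB : Inv 1 _)
  | x :: y :: l, hx, _ => by
      have ht : Inv (y :: l).length (y :: l).prod :=
        inv_prod (y :: l) (fun z hz => hx z (List.mem_cons_of_mem _ hz)) (by simp)
      have hlen : (x :: y :: l).length = (y :: l).length + 1 := rfl
      rw [List.prod_cons, hlen]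
      rcases hx x (by simp) with h | h <;> rw [h]
      · exact stepA ht
      · exact stepB ht

end Statement11Aux

/-- For `n ≥ 2`, the trace of any product of `n` matrices each equal to `A` or `B`
is at most the Lucas number `ℓ(n)`. -/
theorem statement_11 (n : ℕ) (hn : 2 ≤ n) (f : Fin n → Matrix (Fin 2) (Fin 2) ℤ)
    (hf : ∀ i, f i = fibA ∨ f i = fibB) :
    (List.ofFn f).prod.trace ≤ (lucas n : ℤ) := by
  have hne : List.ofFn f ≠ [] := by
    simp [List.ofFn_eq_nil_iff]
    omega
  have hinv := Statement11Aux.inv_prod (List.ofFn f)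
    (by intro x hx; rw [List.mem_ofFn] at hx; obtain ⟨i, rfl⟩ := hx; exact hf i) hne
  rw [List.length_ofFn] at hinv
  obtain ⟨m, rfl⟩ : ∃ m, n = m + 1 := ⟨n - 1, by omega⟩
  obtain ⟨-, -, -, -, -, -, -, -, -, -, -, -, -, htr, -, -⟩ := hinv
  rw [Matrix.trace_fin_two]
  simp only [Nat.add_sub_cancel] at htr
  calc _ ≤ Statement11Aux.F m + Statement11Aux.F (m + 2) := htr
    _ = (lucas (m + 1) : ℤ) := by simp [Statement11Aux.F, lucas]
end

section
/- For all integers n ≥ 2 and 0 ≤ m ≤ n, the trace Tr(A^m B^{n-m}) with A = [[1,1],[1,0]] and B = [[0,1],[1,1]] is at most the Lucas number ℓ(n), with equality when m = 0 or m = n. -/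
lemma powA (a : ℕ) : fibA ^ (a+1) =
    !![(Nat.fib (a+2) : ℤ), Nat.fib (a+1); Nat.fib (a+1), Nat.fib a] := by
  induction a with
  | zero => simp [fibA]
  | succ b ih =>
      rw [pow_succ, ih, fibA, Matrix.mul_fin_two]
      have h := Nat.fib_add_two (n := b+1)
      have h2 := Nat.fib_add_two (n := b)
      push_cast [h, h2]
      ext i j
      fin_cases i <;> fin_cases j <;> simp <;> ring

lemma powB (a : ℕ) : fibB ^ (a+1) =
    !![(Nat.fib a : ℤ), Nat.fib (a+1); Nat.fib (a+1), Nat.fib (a+2)] := by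
  induction a with
  | zero => simp [fibB]
  | succ b ih =>
      rw [pow_succ, ih, fibB, Matrix.mul_fin_two]
      have h := Nat.fib_add_two (n := b+1)
      have h2 := Nat.fib_add_two (n := b)
      push_cast [h, h2]
      ext i j
      fin_cases i <;> fin_cases j <;> simp <;> try ring

lemma natkey (a b : ℕ) : Nat.fib (a+b+1) + Nat.fib (a+b+3) =
    Nat.fib (a+2) * Nat.fib b + 3 * (Nat.fib (a+1) * Nat.fib (b+1)) + Nat.fib a * Nat.fib (b+2) := by
  have h1 := Nat.fib_add a b
  have h2 := Nat.fib_add (a+1) (b+1)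
  have h3 : Nat.fib (a+2) = Nat.fib a + Nat.fib (a+1) := Nat.fib_add_two
  have h4 : Nat.fib (b+2) = Nat.fib b + Nat.fib (b+1) := Nat.fib_add_two
  have e : a + 1 + (b + 1) + 1 = a + b + 3 := by ring
  rw [e] at h2
  rw [h1, h2, h3, h4]; ring

lemma key (m k : ℕ) : (fibA ^ m * fibB ^ k).trace =
    (lucas (m+k) : ℤ) - Nat.fib m * Nat.fib k := by
  match m, k with
  | 0, 0 => simp [lucas, Matrix.trace]
  | 0, b+1 =>
      rw [pow_zero, one_mul, powB, Matrix.trace_fin_two_of]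
      simp [lucas]
  | a+1, 0 =>
      rw [pow_zero, mul_one, powA, Matrix.trace_fin_two_of]
      simp [lucas]
      ring
  | a+1, b+1 =>
      rw [powA, powB]
      rw [Matrix.mul_fin_two, Matrix.trace_fin_two_of]
      have e : a + 1 + (b + 1) = (a + b + 1) + 1 := by ring
      rw [e]
      show _ = ((Nat.fib (a+b+1) + Nat.fib (a+b+1+2) : ℕ) : ℤ) - _
      have e2 : a + b + 1 + 2 = a + b + 3 := by ring
      rw [e2]
      have hk := natkey a b
      push_cast [hk]
      ring

/-- For `n ≥ 2` and `0 ≤ m ≤ n`, `Tr(A^m B^{n-m}) ≤ ℓ(n)`, with equality for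
`m = 0` or `m = n`. -/
theorem statement_12 (n m : ℕ) (hn : 2 ≤ n) (hm : m ≤ n) :
    (fibA ^ m * fibB ^ (n - m)).trace ≤ (lucas n : ℤ) ∧
    ((m = 0 ∨ m = n) → (fibA ^ m * fibB ^ (n - m)).trace = (lucas n : ℤ)) := by
  have hmk : m + (n - m) = n := Nat.add_sub_cancel' hm
  have hk := key m (n - m)
  rw [hmk] at hk
  constructor
  · rw [hk]
    have : (0:ℤ) ≤ Nat.fib m * Nat.fib (n-m) := by positivity
    linarith
  · rintro (rfl | rfl) <;> simp_all
end

section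
/- For a finite simplicial complex Δ (including the empty face) with an acyclic matching having c critical elements, the sum over all i of dim H̃_i(Δ) is at most c. -/
open Classical

variable {V : Type*}

open scoped Classical in
/-- The faces of `Δ` of cardinality `k`. -/
noncomputable def faceSet [Fintype V] (Δ : Set (Finset V)) (k : ℕ) : Finset (Finset V) :=
  Finset.univ.filter (fun s => s ∈ Δ ∧ s.card = k)

open scoped Classical in
/-- The simplicial boundary matrix from faces of cardinality `k+1` to faces of
cardinality `k`, with the standard signs coming from the linear order on the vertices. -/
noncomputable def bdryMatrix [Fintype V] [LinearOrder V] (Δ : Set (Finset V)) (k : ℕ) :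
    Matrix ↥(faceSet Δ k) ↥(faceSet Δ (k + 1)) ℚ :=
  fun t s => if t.1 ⊆ s.1 then
      (-1 : ℚ) ^ ((s.1 \ t.1).sum fun v => ((s.1.filter (· < v)).card)) else 0

/-- The total (reduced) Betti number of the simplicial complex `Δ` over `ℚ`:
the level-`k` summand is `dim C̃_{k-1} - rank ∂_k - rank ∂_{k-1}` where `C̃_{k-1}` is spanned
by the faces of cardinality `k` (including the empty face at `k = 0`). -/
noncomputable def tBetti [Fintype V] [LinearOrder V] (Δ : Set (Finset V)) : ℕ :=
  ∑ k ∈ Finset.range (Fintype.card V + 2),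
    ((faceSet Δ k).card - (bdryMatrix Δ k).rank -
      (if k = 0 then 0 else (bdryMatrix Δ (k - 1)).rank))

/-! If `m k` matched pairs have a lower face with `k` elements, the faces with `k` elements are
the critical ones, the `m k` lower faces and the `m (k - 1)` upper faces. Acyclicity of the
matching lets one order the level-`k` pairs so that the corresponding minor of `∂_k` is
triangular with `±1` on the diagonal, hence `m k ≤ rank ∂_k`; so the `k`-th summand of the
total Betti number is at most the number of critical faces with `k` elements. -/

theorem Function.exists_mem_periodicPts {α : Type*} [Finite α] [Nonempty α] (f : α → α) :
    ∃ x, x ∈ Function.periodicPts f := by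
  obtain ⟨x₀⟩ := ‹Nonempty α›
  obtain ⟨i, j, hij, h⟩ := Finite.exists_ne_map_eq_of_infinite (fun n : ℕ => f^[n] x₀)
  wlog hlt : i < j generalizing i j
  · exact this j i hij.symm h.symm (by omega)
  refine ⟨f^[i] x₀, Function.mk_mem_periodicPts (Nat.sub_pos_of_lt hlt) ?_⟩
  change f^[j - i] (f^[i] x₀) = f^[i] x₀
  rw [← Function.iterate_add_apply, Nat.sub_add_cancel hlt.le]
  exact h.symm

theorem Finset.exists_rel_cycle {α : Type*} (r : α → α → Prop) {T : Finset α}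
    (hT : T.Nonempty) (h : ∀ x ∈ T, ∃ y ∈ T, y ≠ x ∧ r y x) :
    ∃ n, 2 ≤ n ∧ ∃ f : ℕ → α, (∀ i < n, f i ∈ T) ∧ Set.InjOn f (Set.Iio n) ∧
      (∀ i, i + 1 < n → r (f i) (f (i + 1))) ∧ r (f (n - 1)) (f 0) := by
  choose! g hgT hgne hgr using h
  have : Nonempty T := hT.to_subtype
  let G : T → T := fun x => ⟨g x, hgT x x.2⟩
  have hG : ∀ x, G x ≠ x := fun x hx => hgne x x.2 (congrArg Subtype.val hx)
  obtain ⟨y, hy⟩ := Function.exists_mem_periodicPts G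
  set n := Function.minimalPeriod G y
  have hn : 2 ≤ n := by
    have hpos := Function.minimalPeriod_pos_of_mem_periodicPts hy
    have hne1 : n ≠ 1 := fun h1 => hG y (Function.minimalPeriod_eq_one_iff_isFixedPt.1 h1)
    omega
  -- the cycle is the periodic orbit of `y` under the predecessor map `G`, read backwards
  have hstep : ∀ j, r (G^[j + 1] y) (G^[j] y) := fun j => by
    rw [Function.iterate_succ_apply']
    exact hgr _ (G^[j] y).2
  refine ⟨n, hn, fun i => G^[n - 1 - i] y, fun i _ => (G^[n - 1 - i] y).2, ?_, ?_, ?_⟩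
  · intro i hi j hj hij
    have := Function.iterate_injOn_Iio_minimalPeriod (f := G) (x := y)
      (show n - 1 - i < n by omega) (show n - 1 - j < n by omega) (Subtype.ext hij)
    simp only [Set.mem_Iio] at hi hj
    omega
  · intro i hi
    have := hstep (n - 1 - (i + 1))
    rwa [show n - 1 - (i + 1) + 1 = n - 1 - i by omega] at this
  · have := hstep (n - 1)
    rw [show n - 1 + 1 = n by omega, (Function.isPeriodicPt_minimalPeriod G y).eq] at this
    simpa using this

theorem Matrix.card_le_rank_of_exists_pivot {m n ι K : Type*} [Fintype m] [Fintype n] [Fintype ι]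
    [Field K]
    (M : Matrix m n K) (row : ι → m) (col : ι → n) (hdiag : ∀ i, M (row i) (col i) ≠ 0)
    (hpivot : ∀ T : Finset ι, T.Nonempty →
      ∃ i ∈ T, ∀ j ∈ T, j ≠ i → M (row i) (col j) = 0) :
    Fintype.card ι ≤ M.rank := by
  have hli : LinearIndependent K (fun i => M.col (col i)) := by
    rw [Fintype.linearIndependent_iff]
    intro g hg
    by_contra! hne
    obtain ⟨i, hi, hpiv⟩ := hpivot {j | g j ≠ 0} (by simpa [Finset.Nonempty] using hne)
    have hrow := congrFun hg (row i)
    rw [Finset.sum_apply, Finset.sum_eq_single i] at hrow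
    · simp only [Pi.smul_apply, Matrix.col_apply, smul_eq_mul, Pi.zero_apply] at hrow
      exact mul_ne_zero (by simpa using hi) (hdiag i) hrow
    · intro j _ hji
      by_cases hj : g j = 0
      · simp [hj]
      · simp [hpiv j (by simpa using hj) hji]
    · simp
  rw [Matrix.rank_eq_finrank_span_cols, ← finrank_span_eq_card hli]
  exact Submodule.finrank_mono (Submodule.span_mono (Set.range_comp_subset_range _ _))

section Morse

variable {Δ : Set (Finset V)} {P : Set (Finset V × Finset V)}

theorem IsAcyclicMatching.exists_forall_not_subset (hP : IsAcyclicMatching Δ P)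
    {T : Finset (Finset V × Finset V)} (hTP : ↑T ⊆ P) (hT : T.Nonempty) :
    ∃ p ∈ T, ∀ q ∈ T, q ≠ p → ¬ p.1 ⊆ q.2 := by
  by_contra! h
  refine hP.2 ?_
  have hpred : ∀ p ∈ T, ∃ q ∈ T, q ≠ p ∧ p.1 ⊂ q.2 := fun p hp => by
    obtain ⟨q, hq, hqp, hsub⟩ := h p hp
    exact ⟨q, hq, hqp, hsub.ssubset_of_ne (hP.1.2 q (hTP hq) p (hTP hp) hqp).2.2.1.symm⟩
  obtain ⟨n, hn, f, hfT, hinj, hstep, hclose⟩ :=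
    T.exists_rel_cycle (fun p q => q.1 ⊂ p.2) hT hpred
  exact ⟨n, hn, f, fun i hi => hTP (hfT i hi), hinj, hstep, hclose⟩

noncomputable def levelPairs [Fintype V] (P : Set (Finset V × Finset V)) (k : ℕ) :
    Finset (Finset V × Finset V) :=
  {p | p ∈ P ∧ p.1.card = k}

theorem bdryMatrix_apply_eq_zero_iff [Fintype V] [LinearOrder V] {k : ℕ}
    (t : faceSet Δ k) (s : faceSet Δ (k + 1)) :
    bdryMatrix Δ k t s = 0 ↔ ¬ t.1 ⊆ s.1 := by
  unfold bdryMatrix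
  split_ifs with h <;> simp [h]

theorem IsPosetMatching.mem_faceSet_of_mem_levelPairs [Fintype V] (hP : IsPosetMatching Δ P)
    {k : ℕ} {p : Finset V × Finset V} (hp : p ∈ levelPairs P k) :
    p.1 ∈ faceSet Δ k ∧ p.2 ∈ faceSet Δ (k + 1) := by
  simp only [levelPairs, Finset.mem_filter, Finset.mem_univ, true_and] at hp
  obtain ⟨hσ, hτ, -, hcard⟩ := hP.1 p hp.1
  simp [faceSet, hσ, hτ, hcard, hp.2]

/-- Acyclicity makes the boundary coefficients between matched pairs triangular. -/
theorem IsAcyclicMatching.card_levelPairs_le_rank [Fintype V] [LinearOrder V]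
    (hP : IsAcyclicMatching Δ P) (k : ℕ) : (levelPairs P k).card ≤ (bdryMatrix Δ k).rank := by
  have hface := fun p : levelPairs P k => hP.1.mem_faceSet_of_mem_levelPairs p.2
  rw [← Fintype.card_coe]
  refine (bdryMatrix Δ k).card_le_rank_of_exists_pivot (fun p => ⟨p.1.1, (hface p).1⟩)
    (fun p => ⟨p.1.2, (hface p).2⟩) (fun p => ?_) (fun T hT => ?_)
  · rw [Ne, bdryMatrix_apply_eq_zero_iff, not_not]
    exact (hP.1.1 p.1 (Finset.mem_filter.1 p.2).2.1).2.2.1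
  · obtain ⟨p, hpT, hp⟩ :=
      hP.exists_forall_not_subset (T := T.map (Function.Embedding.subtype _))
        (fun p hp => by
          obtain ⟨q, -, rfl⟩ := Finset.mem_map.1 hp
          exact (Finset.mem_filter.1 q.2).2.1)
        hT.map
    obtain ⟨i, hi, rfl⟩ := Finset.mem_map.1 hpT
    refine ⟨i, hi, fun j hj hji => (bdryMatrix_apply_eq_zero_iff _ _).2 ?_⟩
    exact hp j (Finset.mem_map_of_mem _ hj) (Subtype.coe_injective.ne hji)

/-- The last set consists of the pairs whose upper face has `k` elements, described through the
lower face so that it is visibly empty for `k = 0` and equal to `levelPairs P j` for `k = j + 1`. -/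
theorem IsPosetMatching.card_faceSet_le [Fintype V] (hP : IsPosetMatching Δ P) (k : ℕ) :
    (faceSet Δ k).card ≤ {s ∈ (criticalSet Δ P).toFinset | s.card = k}.card +
      (levelPairs P k).card + ({p | p ∈ P ∧ p.1.card + 1 = k} : Finset _).card := by
  have hcover : faceSet Δ k ⊆ {s ∈ (criticalSet Δ P).toFinset | s.card = k} ∪
      (levelPairs P k).image Prod.fst ∪
      ({p | p ∈ P ∧ p.1.card + 1 = k} : Finset _).image Prod.snd := by
    intro s hs
    simp only [faceSet, Finset.mem_filter, Finset.mem_univ, true_and] at hs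
    by_cases hcrit : s ∈ criticalSet Δ P
    · simp [hcrit, hs.2]
    obtain ⟨p, hp, hsp⟩ : ∃ p ∈ P, s = p.1 ∨ s = p.2 := by
      simpa [criticalSet, hs.1, or_iff_not_imp_left] using hcrit
    rcases hsp with rfl | rfl
    · simp only [levelPairs, Finset.mem_union, Finset.mem_image, Finset.mem_filter,
        Finset.mem_univ, true_and]
      exact Or.inl (Or.inr ⟨p, ⟨hp, hs.2⟩, rfl⟩)
    · simp only [Finset.mem_union, Finset.mem_image, Finset.mem_filter, Finset.mem_univ,
        true_and]
      exact Or.inr ⟨p, ⟨hp, (hP.1 p hp).2.2.2 ▸ hs.2⟩, rfl⟩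
  calc (faceSet Δ k).card ≤ _ := Finset.card_le_card hcover
    _ ≤ _ := (Finset.card_union_le _ _).trans
        (add_le_add (Finset.card_union_le _ _) le_rfl)
    _ ≤ _ := add_le_add (add_le_add le_rfl Finset.card_image_le) Finset.card_image_le

theorem IsAcyclicMatching.betti_summand_le [Fintype V] [LinearOrder V]
    (hP : IsAcyclicMatching Δ P) (k : ℕ) :
    (faceSet Δ k).card - (bdryMatrix Δ k).rank -
        (if k = 0 then 0 else (bdryMatrix Δ (k - 1)).rank) ≤
      {s ∈ (criticalSet Δ P).toFinset | s.card = k}.card := by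
  have hfaces := hP.1.card_faceSet_le k
  have hrank := hP.card_levelPairs_le_rank k
  cases k with
  | zero =>
    simp only [Nat.add_eq_zero_iff, one_ne_zero, and_false, Finset.filter_false,
      Finset.card_empty, add_zero] at hfaces
    rw [if_pos rfl, Nat.sub_zero]
    omega
  | succ j =>
    have hrank' := hP.card_levelPairs_le_rank j
    simp only [Nat.add_right_cancel_iff] at hfaces
    change _ ≤ _ + _ + (levelPairs P j).card at hfaces
    simp only [Nat.add_one_ne_zero, if_false, Nat.add_one_sub_one]
    omega

end Morse

theorem statement_17_general {V : Type*} [Fintype V] [LinearOrder V] (Δ : Set (Finset V))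
    (P : Set (Finset V × Finset V)) (c : ℕ)
    (hP : IsAcyclicMatching Δ P) (hc : (criticalSet Δ P).ncard = c) :
    tBetti Δ ≤ c := by
  have hlevel : ∀ s ∈ (criticalSet Δ P).toFinset, s.card ∈ Finset.range (Fintype.card V + 2) :=
    fun s _ => Finset.mem_range.2 (by have := s.card_le_univ; omega)
  calc tBetti Δ
      ≤ ∑ k ∈ Finset.range (Fintype.card V + 2),
          {s ∈ (criticalSet Δ P).toFinset | s.card = k}.card :=
        Finset.sum_le_sum fun k _ => hP.betti_summand_le k
    _ = (criticalSet Δ P).toFinset.card := (Finset.card_eq_sum_card_fiberwise hlevel).symm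
    _ = c := by rw [← Set.ncard_eq_toFinset_card', hc]

/-- Discrete Morse inequality: for a finite simplicial complex `Δ` (including the empty
face) with an acyclic matching having `c` critical cells, the total reduced Betti number
of `Δ` is at most `c`. -/
theorem statement_17 {V : Type*} [Fintype V] [LinearOrder V] (Δ : Set (Finset V))
    (hcomplex : ∀ s ∈ Δ, ∀ t ⊆ s, t ∈ Δ) (hempty : ∅ ∈ Δ)
    (P : Set (Finset V × Finset V)) (c : ℕ)
    (hP : IsAcyclicMatching Δ P) (hc : (criticalSet Δ P).ncard = c) :
    tBetti Δ ≤ c :=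
  statement_17_general Δ P c hP hc
end

section
/- Let φ: Δ → Q be an order-preserving map from the face poset of a simplicial complex Δ to a poset Q, and for each q ∈ Q let M_q be an acyclic matching contained in the fiber φ^{-1}(q). Then the union M = ∪_{q∈Q} M_q is an acyclic matching on Δ. -/
open Classical

variable {V : Type*}

/-- The Cluster Lemma: if `φ` is an order-preserving map from the face poset of `Δ` to a
poset `Q` and `M q` is an acyclic matching contained in the fiber `φ⁻¹(q)` for each
`q ∈ Q`, then the union of the `M q` is an acyclic matching on `Δ`. -/
theorem statement_18 {V : Type*} {Q : Type*} [PartialOrder Q] (Δ : Set (Finset V))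
    (φ : Finset V → Q) (hφ : ∀ s ∈ Δ, ∀ t ∈ Δ, s ⊆ t → φ s ≤ φ t)
    (M : Q → Set (Finset V × Finset V))
    (hM : ∀ q, IsAcyclicMatching Δ (M q) ∧ ∀ p ∈ M q, φ p.1 = q ∧ φ p.2 = q) :
    IsAcyclicMatching Δ (⋃ q, M q) := by
  constructor
  · constructor
    · intro p hp
      obtain ⟨q, hq⟩ := Set.mem_iUnion.mp hp
      exact (hM q).1.1.1 p hq
    · intro p hp p' hp' hne
      obtain ⟨a, ha⟩ := Set.mem_iUnion.mp hp
      obtain ⟨b, hb⟩ := Set.mem_iUnion.mp hp'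
      by_cases hab : a = b
      · subst hab
        exact (hM a).1.1.2 p ha p' hb hne
      · obtain ⟨h1, h2⟩ := (hM a).2 p ha
        obtain ⟨h3, h4⟩ := (hM b).2 p' hb
        refine ⟨?_, ?_, ?_, ?_⟩ <;> intro h <;> apply hab
        · rw [← h1, h, h3]
        · rw [← h1, h, h4]
        · rw [← h2, h, h3]
        · rw [← h2, h, h4]
  · rintro ⟨n, hn, f, hfP, hinj, hchain, hcyc⟩
    -- each f i is in M (φ (f i).1)
    have hmem : ∀ i < n, f i ∈ M (φ (f i).1) := by
      intro i hi
      obtain ⟨q, hq⟩ := Set.mem_iUnion.mp (hfP i hi)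
      rwa [((hM q).2 _ hq).1]
    have hΔ : ∀ i < n, (f i).1 ∈ Δ ∧ (f i).2 ∈ Δ := by
      intro i hi
      obtain ⟨h1, h2, _⟩ := (hM _).1.1.1 _ (hmem i hi)
      exact ⟨h1, h2⟩
    have hval : ∀ i < n, φ (f i).2 = φ (f i).1 := by
      intro i hi
      obtain ⟨h1, h2⟩ := (hM _).2 _ (hmem i hi)
      rw [h2, h1]
    -- q (i+1) ≤ q i
    have hstep : ∀ i, i + 1 < n → φ (f (i + 1)).1 ≤ φ (f i).1 := by
      intro i hi
      have hi' : i < n := Nat.lt_of_succ_lt hi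
      calc φ (f (i + 1)).1 ≤ φ (f i).2 :=
            hφ _ (hΔ (i+1) hi).1 _ (hΔ i hi').2 (hchain i hi).subset
        _ = φ (f i).1 := hval i hi'
    have hdec : ∀ j < n, ∀ i ≤ j, φ (f j).1 ≤ φ (f i).1 := by
      intro j hj
      induction j with
      | zero => intro i hi; rw [Nat.le_zero.mp hi]
      | succ k ih =>
        intro i hi
        rcases Nat.eq_or_lt_of_le hi with h | h
        · subst h; exact le_refl _
        · exact le_trans (hstep k hj) (ih (Nat.lt_of_succ_lt hj) i (Nat.lt_succ_iff.mp h))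
    have hn1 : n - 1 < n := by omega
    have hlast : φ (f 0).1 ≤ φ (f (n - 1)).1 := by
      calc φ (f 0).1 ≤ φ (f (n - 1)).2 :=
            hφ _ (hΔ 0 (by omega)).1 _ (hΔ (n-1) hn1).2 hcyc.subset
        _ = φ (f (n - 1)).1 := hval _ hn1
    have hall : ∀ i < n, φ (f i).1 = φ (f 0).1 := by
      intro i hi
      have h1 : φ (f i).1 ≤ φ (f 0).1 := hdec i hi 0 (Nat.zero_le _)
      have h2 : φ (f 0).1 ≤ φ (f i).1 :=
        le_trans hlast (hdec (n-1) hn1 i (by omega))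
      exact le_antisymm h1 h2
    apply (hM (φ (f 0).1)).1.2
    refine ⟨n, hn, f, ?_, hinj, hchain, hcyc⟩
    intro i hi
    rw [← hall i hi]
    exact hmem i hi
end
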